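/- There exists a holomorphic function f₀ : ℂ² → ℂ vanishing transversally (i.e., at every point where f₀ = 0 the differential of f₀ is nonzero) such that the 2-dimensional Hausdorff measure of the set {x ∈ Z(f₀) ∩ 𝔹 : K(x) ∈ [−2, −1/4]} is strictly greater than 1, where 𝔹 is the open unit ball of ℂ² and Z(f₀) = {f₀ = 0}. -/

import Mathlib

open MeasureTheory

noncomputable instance : MeasurableSpace (EuclideanSpace ℂ (Fin 2)) := borel _

instance : BorelSpace (EuclideanSpace ℂ (Fin 2)) := ⟨rfl⟩

/-- The first coordinate direction in `ℂ²`. -/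
noncomputable def e₀ : EuclideanSpace ℂ (Fin 2) := EuclideanSpace.single 0 1

/-- The second coordinate direction in `ℂ²`. -/
noncomputable def e₁ : EuclideanSpace ℂ (Fin 2) := EuclideanSpace.single 1 1

/-- The partial derivative `f_z`. -/
noncomputable def pz (f : EuclideanSpace ℂ (Fin 2) → ℂ) (p : EuclideanSpace ℂ (Fin 2)) : ℂ :=
  fderiv ℂ f p e₀

/-- The partial derivative `f_w`. -/
noncomputable def pw (f : EuclideanSpace ℂ (Fin 2) → ℂ) (p : EuclideanSpace ℂ (Fin 2)) : ℂ :=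
  fderiv ℂ f p e₁

/-- The Gaussian curvature of the complex curve `{f = 0} ⊂ ℂ²` for the restriction of the
Euclidean metric, given by Vitter's formula
`K = −|2 f_{zw} f_z f_w − f_{zz} f_w² − f_{ww} f_z²|² / (|f_z|² + |f_w|²)³`. -/
noncomputable def gaussK (f : EuclideanSpace ℂ (Fin 2) → ℂ)
    (p : EuclideanSpace ℂ (Fin 2)) : ℝ :=
  -(‖2 * pz (pw f) p * pz f p * pw f p
      - pz (pz f) p * (pw f p) ^ 2 - pw (pw f) p * (pz f p) ^ 2‖) ^ 2
    / ((‖pz f p‖) ^ 2 + (‖pw f p‖) ^ 2) ^ 3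

/-! ### Auxiliary definitions -/


noncomputable def cc : ℂ := ((Real.sqrt 2)⁻¹ : ℝ)

noncomputable def ff : EuclideanSpace ℂ (Fin 2) → ℂ := fun p => p 1 - cc * (p 0 * p 0)

noncomputable def LL (p : EuclideanSpace ℂ (Fin 2)) : EuclideanSpace ℂ (Fin 2) →L[ℂ] ℂ :=
  EuclideanSpace.proj 1 - cc • (p 0 • EuclideanSpace.proj 0 + p 0 • EuclideanSpace.proj 0)

lemma hasProj (i : Fin 2) (p : EuclideanSpace ℂ (Fin 2)) :
    HasFDerivAt (fun q : EuclideanSpace ℂ (Fin 2) => q i)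
      (EuclideanSpace.proj (𝕜 := ℂ) i) p := by
  have := (PiLp.proj (𝕜 := ℂ) 2 (fun _ : Fin 2 => ℂ) i).hasFDerivAt (x := p)
  exact this

lemma hasF (p : EuclideanSpace ℂ (Fin 2)) : HasFDerivAt ff (LL p) p :=
  (hasProj 1 p).sub (((hasProj 0 p).mul (hasProj 0 p)).const_mul cc)

lemma fderiv_ff (p : EuclideanSpace ℂ (Fin 2)) : fderiv ℂ ff p = LL p := (hasF p).fderiv

@[simp] lemma e₀_zero : (e₀ : EuclideanSpace ℂ (Fin 2)) 0 = 1 := by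
  simp [e₀, EuclideanSpace.single_apply]
@[simp] lemma e₀_one : (e₀ : EuclideanSpace ℂ (Fin 2)) 1 = 0 := by
  simp [e₀, EuclideanSpace.single_apply]
@[simp] lemma e₁_zero : (e₁ : EuclideanSpace ℂ (Fin 2)) 0 = 0 := by
  simp [e₁, EuclideanSpace.single_apply]
@[simp] lemma e₁_one : (e₁ : EuclideanSpace ℂ (Fin 2)) 1 = 1 := by
  simp [e₁, EuclideanSpace.single_apply]

lemma pz_ff (p : EuclideanSpace ℂ (Fin 2)) : pz ff p = -(2 * cc * p 0) := by
  simp only [pz, fderiv_ff, LL, ContinuousLinearMap.sub_apply,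
    ContinuousLinearMap.smul_apply, ContinuousLinearMap.add_apply, PiLp.proj_apply,
    e₀_zero, e₀_one, smul_eq_mul]
  ring

lemma pw_ff (p : EuclideanSpace ℂ (Fin 2)) : pw ff p = 1 := by
  simp only [pw, fderiv_ff, LL, ContinuousLinearMap.sub_apply,
    ContinuousLinearMap.smul_apply, ContinuousLinearMap.add_apply, PiLp.proj_apply,
    e₁_zero, e₁_one, smul_eq_mul]
  ring

lemma pzpz_ff (p : EuclideanSpace ℂ (Fin 2)) : pz (pz ff) p = -(2 * cc) := by
  have h : ∀ q : EuclideanSpace ℂ (Fin 2), pz ff q = -(2 * cc * q 0) := pz_ff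
  have hd : HasFDerivAt (pz ff) (-((2 * cc) • EuclideanSpace.proj (𝕜 := ℂ) 0)) p := by
    have := (((hasProj 0 p).const_mul (2 * cc)).neg).congr_of_eventuallyEq
      (Filter.Eventually.of_forall fun q => (h q))
    simpa using this
  simp only [pz, hd.fderiv, ContinuousLinearMap.neg_apply, ContinuousLinearMap.smul_apply,
    PiLp.proj_apply, e₀_zero, smul_eq_mul, mul_one]

lemma pzpw_ff (p : EuclideanSpace ℂ (Fin 2)) : pz (pw ff) p = 0 := by
  have hd : HasFDerivAt (pw ff) (0 : EuclideanSpace ℂ (Fin 2) →L[ℂ] ℂ) p := by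
    have := (hasFDerivAt_const (𝕜 := ℂ) (1 : ℂ) p).congr_of_eventuallyEq
      (Filter.Eventually.of_forall fun q => (pw_ff q))
    simpa using this
  simp [pz, hd.fderiv]

lemma pwpw_ff (p : EuclideanSpace ℂ (Fin 2)) : pw (pw ff) p = 0 := by
  have hd : HasFDerivAt (pw ff) (0 : EuclideanSpace ℂ (Fin 2) →L[ℂ] ℂ) p := by
    have := (hasFDerivAt_const (𝕜 := ℂ) (1 : ℂ) p).congr_of_eventuallyEq
      (Filter.Eventually.of_forall fun q => (pw_ff q))
    simpa using this
  simp [pw, hd.fderiv]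

lemma abs_cc_sq : (‖cc‖) ^ 2 = 1 / 2 := by
  rw [cc, Complex.norm_real, Real.norm_of_nonneg (by positivity), inv_pow,
    Real.sq_sqrt (by norm_num : (0:ℝ) ≤ 2)]
  norm_num

lemma gaussK_ff (p : EuclideanSpace ℂ (Fin 2)) :
    gaussK ff p = -2 / ((2 * (‖p 0‖) ^ 2 + 1) ^ 3) := by
  rw [gaussK, pz_ff, pw_ff, pzpz_ff, pzpw_ff, pwpw_ff]
  have h1 : (2 * (0:ℂ) * -(2 * cc * p 0) * 1 - -(2 * cc) * 1 ^ 2 - 0 * (-(2 * cc * p 0)) ^ 2)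
      = 2 * cc := by ring
  rw [h1]
  have h2 : (‖2 * cc‖) ^ 2 = 2 := by
    rw [norm_mul, mul_pow, abs_cc_sq, Complex.norm_two]
    norm_num
  have h3 : (‖-(2 * cc * p 0)‖) ^ 2 = 2 * (‖p 0‖) ^ 2 := by
    rw [norm_neg, norm_mul, norm_mul, mul_pow, mul_pow, abs_cc_sq, Complex.norm_two]
    ring
  rw [h2, h3, norm_one, one_pow]

/-! ### The graph points -/

noncomputable def pt (z : ℂ) : EuclideanSpace ℂ (Fin 2) :=
  (WithLp.equiv 2 (Fin 2 → ℂ)).symm ![z, cc * (z * z)]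

@[simp] lemma pt_zero (z : ℂ) : pt z 0 = z := by
  simp [pt]

@[simp] lemma pt_one (z : ℂ) : pt z 1 = cc * (z * z) := by
  simp [pt]

lemma lipProj : LipschitzWith 1 (fun p : EuclideanSpace ℂ (Fin 2) => p 0) := by
  apply LipschitzWith.of_dist_le_mul
  intro p q
  rw [NNReal.coe_one, one_mul, EuclideanSpace.dist_eq]
  refine le_trans (le_of_eq (Real.sqrt_sq dist_nonneg).symm) (Real.sqrt_le_sqrt ?_)
  exact Finset.single_le_sum (f := fun i => dist (p i) (q i) ^ 2)
    (fun i _ => sq_nonneg _) (Finset.mem_univ 0)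

lemma lipReIm : LipschitzWith 1 (fun z : ℂ => (z.re, z.im)) := by
  apply LipschitzWith.of_dist_le_mul
  intro x y
  rw [NNReal.coe_one, one_mul, Prod.dist_eq]
  simp only [Real.dist_eq, Complex.dist_eq]
  apply max_le
  · rw [← Complex.sub_re]; exact Complex.abs_re_le_norm _
  · rw [← Complex.sub_im]; exact Complex.abs_im_le_norm _

lemma vol_le_H (s : Set ℂ) (hs : MeasurableSet s) : volume s ≤ μH[2] s := by
  calc volume s = volume (Complex.measurableEquivRealProd '' s) := by
        rw [MeasurableEquiv.image_eq_preimage_symm]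
        exact ((MeasurePreserving.symm Complex.measurableEquivRealProd
          Complex.volume_preserving_equiv_real_prod).measure_preimage
          hs.nullMeasurableSet).symm
    _ = μH[2] (Complex.measurableEquivRealProd '' s) := by rw [hausdorffMeasure_prod_real]
    _ = μH[2] ((fun z : ℂ => (z.re, z.im)) '' s) := rfl
    _ ≤ (1 : ENNReal) ^ (2:ℝ) * μH[2] s := by
        simpa using lipReIm.hausdorffMeasure_image_le (by norm_num : (0:ℝ) ≤ 2) s
    _ = μH[2] s := by simp

lemma mem_S (z : ℂ) (hz : ‖z‖ < (Real.sqrt 2)⁻¹) :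
    ff (pt z) = 0 ∧ pt z ∈ Metric.ball (0 : EuclideanSpace ℂ (Fin 2)) 1 ∧
      gaussK ff (pt z) ∈ Set.Icc (-2 : ℝ) (-(1 / 4)) := by
  have h2 : ((Real.sqrt 2)⁻¹) ^ 2 = 1 / 2 := by
    rw [inv_pow, Real.sq_sqrt (by norm_num : (0:ℝ) ≤ 2)]; norm_num
  have ht0 : (0:ℝ) ≤ ‖z‖ := norm_nonneg z
  have htlt : (‖z‖) ^ 2 < 1 / 2 := by
    calc (‖z‖) ^ 2 < ((Real.sqrt 2)⁻¹) ^ 2 := by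
          apply pow_lt_pow_left₀ hz ht0; norm_num
      _ = 1 / 2 := h2
  refine ⟨?_, ?_, ?_⟩
  · simp [ff]
  · rw [mem_ball_zero_iff, EuclideanSpace.norm_eq]
    rw [show ∑ i, ‖pt z i‖ ^ 2 = ‖pt z 0‖ ^ 2 + ‖pt z 1‖ ^ 2 from Fin.sum_univ_two _]
    have hlt : ‖pt z 0‖ ^ 2 + ‖pt z 1‖ ^ 2 < 1 := by
      rw [pt_zero, pt_one, norm_mul, mul_pow,
        abs_cc_sq, norm_mul]
      nlinarith [htlt, ht0, sq_nonneg (‖z‖)]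
    calc Real.sqrt (‖pt z 0‖ ^ 2 + ‖pt z 1‖ ^ 2) < Real.sqrt 1 := by
          apply Real.sqrt_lt_sqrt (by positivity) hlt
      _ = 1 := Real.sqrt_one
  · rw [gaussK_ff, pt_zero]
    set t := (‖z‖) ^ 2 with hts
    have hd : (0:ℝ) < (2 * t + 1) ^ 3 := by positivity
    have ht2 : (0:ℝ) ≤ t := sq_nonneg _
    constructor
    · rw [le_div_iff₀ hd]
      nlinarith [ht2, mul_nonneg ht2 ht2, mul_nonneg (mul_nonneg ht2 ht2) ht2]
    · rw [div_le_iff₀ hd]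
      nlinarith [ht2, htlt, mul_nonneg ht2 ht2, mul_nonneg (mul_nonneg ht2 ht2) ht2,
        mul_nonneg ht2 (sub_pos.mpr htlt).le,
        mul_nonneg (mul_nonneg ht2 ht2) (sub_pos.mpr htlt).le]

/-- There exists a holomorphic function `f₀ : ℂ² → ℂ` vanishing transversally
such that the 2-dimensional Hausdorff measure of `{x ∈ Z(f₀) ∩ 𝔹 : K(x) ∈ [−2, −1/4]}` is
strictly greater than `1`, where `𝔹` is the open unit ball of `ℂ²`. -/
theorem exists_holomorphic_curved_curve :
    ∃ f₀ : EuclideanSpace ℂ (Fin 2) → ℂ,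
      Differentiable ℂ f₀ ∧
      (∀ p, f₀ p = 0 → fderiv ℂ f₀ p ≠ 0) ∧
      1 < μH[2] {p : EuclideanSpace ℂ (Fin 2) |
        f₀ p = 0 ∧ p ∈ Metric.ball (0 : EuclideanSpace ℂ (Fin 2)) 1 ∧
        gaussK f₀ p ∈ Set.Icc (-2 : ℝ) (-(1 / 4))} := by
  refine ⟨ff, fun p => (hasF p).differentiableAt, ?_, ?_⟩
  · intro p _ h
    have h1 : fderiv ℂ ff p e₁ = 0 := by rw [h]; rfl
    rw [fderiv_ff] at h1
    simp [LL, ContinuousLinearMap.sub_apply, ContinuousLinearMap.smul_apply,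
      ContinuousLinearMap.add_apply, PiLp.proj_apply] at h1
  · set S := {p : EuclideanSpace ℂ (Fin 2) | ff p = 0 ∧
      p ∈ Metric.ball (0 : EuclideanSpace ℂ (Fin 2)) 1 ∧
      gaussK ff p ∈ Set.Icc (-2 : ℝ) (-(1 / 4))} with hS
    have hsub : Metric.ball (0:ℂ) ((Real.sqrt 2)⁻¹) ⊆
        (fun p : EuclideanSpace ℂ (Fin 2) => p 0) '' S := by
      intro z hz
      rw [Metric.mem_ball, dist_zero_right] at hz
      exact ⟨pt z, mem_S z hz, pt_zero z⟩
    have h1 : (1:ENNReal) < volume (Metric.ball (0:ℂ) ((Real.sqrt 2)⁻¹)) := by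
      rw [Complex.volume_ball]
      have e1 : (ENNReal.ofReal ((Real.sqrt 2)⁻¹)) ^ 2 = ENNReal.ofReal (1/2) := by
        rw [← ENNReal.ofReal_pow (by positivity), inv_pow,
          Real.sq_sqrt (by norm_num : (0:ℝ) ≤ 2)]
        norm_num
      have e2 : (NNReal.pi : ENNReal) = ENNReal.ofReal Real.pi := by
        rw [← NNReal.coe_real_pi, ENNReal.ofReal_coe_nnreal]
      rw [e1, e2, ← ENNReal.ofReal_mul (by norm_num), ← ENNReal.ofReal_one,
        ENNReal.ofReal_lt_ofReal_iff (by positivity)]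
      nlinarith [Real.pi_gt_three]
    calc (1:ENNReal) < volume (Metric.ball (0:ℂ) ((Real.sqrt 2)⁻¹)) := h1
      _ ≤ μH[2] (Metric.ball (0:ℂ) ((Real.sqrt 2)⁻¹)) := vol_le_H _ measurableSet_ball
      _ ≤ μH[2] ((fun p : EuclideanSpace ℂ (Fin 2) => p 0) '' S) := measure_mono hsub
      _ ≤ (1:ENNReal) ^ (2:ℝ) * μH[2] S :=
          lipProj.hausdorffMeasure_image_le (by norm_num : (0:ℝ) ≤ 2) S
      _ = μH[2] S := by simp
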